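/- arXiv:2008.10123 — 7 statements merged into one kernel-verified Lean document; each statement's English description precedes it below -/
import Mathlib

section
/- Let V be a finite ground set and let f be a normalized, monotone, submodular set function on V. Fix a cardinality k with 1 ≤ k ≤ |V|, and let S* be a subset of V of cardinality k maximizing f among all subsets of cardinality k. Let S_0 = ∅ and, for each i < k, let S_{i+1} = S_i ∪ {x_i}, where x_i ∈ V \ S_i satisfies f(S_i ∪ {x_i}) ≥ f(S_i ∪ {y}) for every y ∈ V \ S_i (greedy choice). Then the greedy output S# = S_k satisfies f(S#) ≥ (1 − 1/e) · f(S*). -/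
lemma submodular_union_telescope {V : Type*} [DecidableEq V]
    (f : Finset V → ℝ)
    (hsub : ∀ S T : Finset V, S ⊆ T → ∀ x ∉ T,
      f (insert x S) - f S ≥ f (insert x T) - f T) :
    ∀ (T A : Finset V), f (A ∪ T) ≤ f A + ∑ y ∈ T \ A, (f (insert y A) - f A) := by
  intro T
  induction T using Finset.induction_on with
  | empty => intro A; simp
  | @insert a T' ha ih =>
    intro A
    by_cases haA : a ∈ A
    · have h1 : A ∪ insert a T' = A ∪ T' := by
        rw [Finset.union_insert, Finset.insert_eq_self.2 (Finset.mem_union_left _ haA)]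
      have h2 : insert a T' \ A = T' \ A := Finset.insert_sdiff_of_mem _ haA
      rw [h1, h2]; exact ih A
    · have h1 : A ∪ insert a T' = insert a (A ∪ T') := Finset.union_insert _ _ _
      have h2 : insert a T' \ A = insert a (T' \ A) := Finset.insert_sdiff_of_notMem _ haA
      have ha' : a ∉ T' \ A := fun h => ha (Finset.mem_sdiff.1 h).1
      rw [h1, h2, Finset.sum_insert ha']
      have haAT : a ∉ A ∪ T' := by simp [haA, ha]
      have := hsub A (A ∪ T') Finset.subset_union_left a haAT
      have := ih A
      linarith

/-- Greedy maximization of a normalized, monotone, submodular set function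
achieves a `(1 - 1/e)` approximation guarantee (Nemhauser–Wolsey–Fisher). -/
theorem greedy_submodular_one_sub_inv_exp_bound
    {V : Type*} [Fintype V] [DecidableEq V]
    (f : Finset V → ℝ)
    (hnorm : f ∅ = 0)
    (hmono : ∀ S T : Finset V, S ⊆ T → f S ≤ f T)
    (hsub : ∀ S T : Finset V, S ⊆ T → ∀ x ∉ T,
      f (insert x S) - f S ≥ f (insert x T) - f T)
    (k : ℕ) (hk1 : 1 ≤ k) (hk2 : k ≤ Fintype.card V)
    (Sstar : Finset V) (hcard : Sstar.card = k)
    (hopt : ∀ T : Finset V, T.card = k → f T ≤ f Sstar)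
    (S : ℕ → Finset V) (x : ℕ → V)
    (hS0 : S 0 = ∅)
    (hstep : ∀ i < k, x i ∉ S i ∧ S (i + 1) = insert (x i) (S i) ∧
      ∀ y : V, y ∉ S i → f (insert (x i) (S i)) ≥ f (insert y (S i))) :
    f (S k) ≥ (1 - 1 / Real.exp 1) * f Sstar := by
  have hkpos : (0:ℝ) < (k:ℝ) := by exact_mod_cast hk1
  have hfstar0 : 0 ≤ f Sstar := hnorm ▸ hmono ∅ Sstar (Finset.empty_subset _)
  -- per-step gain
  have hgain : ∀ i < k, f Sstar - f (S (i+1)) ≤ (1 - 1/(k:ℝ)) * (f Sstar - f (S i)) := by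
    intro i hi
    obtain ⟨hx, hS1, hmax⟩ := hstep i hi
    have hΔ : 0 ≤ f (S (i+1)) - f (S i) := by
      have := hmono (S i) (S (i+1)) (by rw [hS1]; exact Finset.subset_insert _ _)
      linarith
    have htel := submodular_union_telescope f hsub Sstar (S i)
    have hsum : ∑ y ∈ Sstar \ S i, (f (insert y (S i)) - f (S i))
        ≤ (Sstar \ S i).card • (f (S (i+1)) - f (S i)) := by
      apply Finset.sum_le_card_nsmul
      intro y hy
      have hyn : y ∉ S i := (Finset.mem_sdiff.1 hy).2
      have := hmax y hyn
      rw [hS1]; linarith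
    rw [nsmul_eq_mul] at hsum
    have hcard2 : ((Sstar \ S i).card : ℝ) ≤ (k:ℝ) := by
      have : (Sstar \ S i).card ≤ Sstar.card := Finset.card_le_card (Finset.sdiff_subset)
      exact_mod_cast hcard ▸ this
    have hcardmul : ((Sstar \ S i).card : ℝ) * (f (S (i+1)) - f (S i))
        ≤ (k:ℝ) * (f (S (i+1)) - f (S i)) := mul_le_mul_of_nonneg_right hcard2 hΔ
    have hmon2 : f Sstar ≤ f (S i ∪ Sstar) := hmono _ _ Finset.subset_union_right
    have key : f Sstar - f (S i) ≤ (k:ℝ) * (f (S (i+1)) - f (S i)) := by linarith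
    have h2 : (f Sstar - f (S i)) / (k:ℝ) ≤ f (S (i+1)) - f (S i) :=
      (div_le_iff₀ hkpos).2 (by linarith)
    have hring : (1 - 1/(k:ℝ)) * (f Sstar - f (S i))
        = (f Sstar - f (S i)) - (f Sstar - f (S i)) / (k:ℝ) := by ring
    linarith
  have hfrac : 0 ≤ 1 - 1/(k:ℝ) := by
    have : 1/(k:ℝ) ≤ 1 := by
      rw [div_le_one hkpos]; exact_mod_cast hk1
    linarith
  -- iterate
  have hiter : ∀ i ≤ k, f Sstar - f (S i) ≤ (1 - 1/(k:ℝ))^i * f Sstar := by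
    intro i
    induction i with
    | zero => intro _; rw [hS0, hnorm, pow_zero, one_mul]; linarith
    | succ i ih =>
      intro hik
      have hi : i < k := Nat.lt_of_succ_le hik
      have h1 := hgain i hi
      have h2 := ih (Nat.le_of_lt hi)
      have h3 := mul_le_mul_of_nonneg_left h2 hfrac
      calc f Sstar - f (S (i+1)) ≤ (1 - 1/(k:ℝ)) * (f Sstar - f (S i)) := h1
        _ ≤ (1 - 1/(k:ℝ)) * ((1 - 1/(k:ℝ))^i * f Sstar) := h3
        _ = (1 - 1/(k:ℝ))^(i+1) * f Sstar := by ring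
  have hfin := hiter k le_rfl
  have hpow : (1 - 1/(k:ℝ))^k ≤ 1 / Real.exp 1 := by
    have h1 : (1 - 1/(k:ℝ)) ≤ Real.exp (-(1/(k:ℝ))) := by
      have := Real.add_one_le_exp (-(1/(k:ℝ))); linarith
    calc (1 - 1/(k:ℝ))^k ≤ (Real.exp (-(1/(k:ℝ))))^k := pow_le_pow_left₀ hfrac h1 k
      _ = Real.exp ((k:ℝ) * (-(1/(k:ℝ)))) := (Real.exp_nat_mul _ k).symm
      _ = Real.exp (-1) := by congr 1; field_simp
      _ = 1 / Real.exp 1 := by rw [Real.exp_neg, one_div]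
  have hpows : (1 - 1/(k:ℝ))^k * f Sstar ≤ (1 / Real.exp 1) * f Sstar :=
    mul_le_mul_of_nonneg_right hpow hfstar0
  have hexp : (1 - 1 / Real.exp 1) * f Sstar = f Sstar - (1 / Real.exp 1) * f Sstar := by ring
  linarith
end

section
/- Let V be a finite ground set and let f be a normalized, monotone, submodular set function on V. Fix a cardinality k with 1 ≤ k ≤ |V|, and let S* be a subset of V of cardinality k maximizing f among all subsets of cardinality k. Let S_0 = ∅ and, for each i < k, let S_{i+1} = S_i ∪ {x_i}, where x_i ∈ V \ S_i satisfies f(S_i ∪ {x_i}) ≥ f(S_i ∪ {y}) for every y ∈ V \ S_i. Then f(S_k) ≥ (1 − (1 − 1/k)^k) · f(S*). -/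
/-- Telescoping/submodularity bound: the gain of adding a whole set is at most
the sum of singleton gains. -/
lemma submod_sum_bound {V : Type*} [Fintype V] [DecidableEq V]
    (f : Finset V → ℝ)
    (hsub : ∀ S T : Finset V, S ⊆ T → ∀ x ∉ T,
      f (insert x S) - f S ≥ f (insert x T) - f T)
    (A : Finset V) : ∀ S : Finset V,
      f (S ∪ A) - f S ≤ ∑ y ∈ A, (f (insert y S) - f S) := by
  induction A using Finset.induction with
  | empty => intro S; simp
  | @insert a A ha ih =>
    intro S
    rw [Finset.sum_insert ha]
    have h1 : S ∪ insert a A = insert a (S ∪ A) := by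
      ext z; simp [or_assoc, or_left_comm, or_comm]
    have h2 : f (insert a (S ∪ A)) - f (S ∪ A) ≤ f (insert a S) - f S := by
      by_cases haS : a ∈ S ∪ A
      · have : insert a (S ∪ A) = S ∪ A := Finset.insert_eq_self.mpr haS
        rw [this]
        rcases Finset.mem_union.mp haS with h | h
        · have h' : insert a S = S := Finset.insert_eq_self.mpr h
          rw [h']; simp
        · exact absurd h ha
      · exact hsub S (S ∪ A) Finset.subset_union_left a haS
    have := ih S
    rw [h1]
    linarith

/-- Greedy maximization of a normalized, monotone, submodular set function
achieves a `(1 - (1 - 1/k)^k)` approximation guarantee. -/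
theorem greedy_submodular_pow_bound
    {V : Type*} [Fintype V] [DecidableEq V]
    (f : Finset V → ℝ)
    (hnorm : f ∅ = 0)
    (hmono : ∀ S T : Finset V, S ⊆ T → f S ≤ f T)
    (hsub : ∀ S T : Finset V, S ⊆ T → ∀ x ∉ T,
      f (insert x S) - f S ≥ f (insert x T) - f T)
    (k : ℕ) (hk1 : 1 ≤ k) (hk2 : k ≤ Fintype.card V)
    (Sstar : Finset V) (hcard : Sstar.card = k)
    (hopt : ∀ T : Finset V, T.card = k → f T ≤ f Sstar)
    (S : ℕ → Finset V) (x : ℕ → V)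
    (hS0 : S 0 = ∅)
    (hstep : ∀ i < k, x i ∉ S i ∧ S (i + 1) = insert (x i) (S i) ∧
      ∀ y : V, y ∉ S i → f (insert (x i) (S i)) ≥ f (insert y (S i))) :
    f (S k) ≥ (1 - (1 - 1 / (k : ℝ)) ^ k) * f Sstar := by
  have hkpos : (0 : ℝ) < k := by exact_mod_cast hk1
  have hfstar : 0 ≤ f Sstar := by
    have := hmono ∅ Sstar (Finset.empty_subset _); linarith [hnorm]
  -- per-step bound
  have step : ∀ i < k, f Sstar - f (S i) ≤ k * (f (S (i+1)) - f (S i)) := by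
    intro i hi
    obtain ⟨hx, hSi1, hbest⟩ := hstep i hi
    have gain_nonneg : 0 ≤ f (S (i+1)) - f (S i) := by
      rw [hSi1]
      have := hmono (S i) (insert (x i) (S i)) (Finset.subset_insert _ _)
      linarith
    set A := Sstar \ S i with hA
    have h1 : f Sstar ≤ f (S i ∪ A) := by
      apply hmono
      intro z hz
      by_cases h : z ∈ S i
      · exact Finset.mem_union_left _ h
      · exact Finset.mem_union_right _ (Finset.mem_sdiff.mpr ⟨hz, h⟩)
    have h2 := submod_sum_bound f hsub A (S i)
    have h3 : ∑ y ∈ A, (f (insert y (S i)) - f (S i))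
        ≤ ∑ _y ∈ A, (f (S (i+1)) - f (S i)) := by
      apply Finset.sum_le_sum
      intro y hy
      have hyn : y ∉ S i := (Finset.mem_sdiff.mp hy).2
      have := hbest y hyn
      rw [hSi1]
      linarith
    have h4 : ∑ _y ∈ A, (f (S (i+1)) - f (S i)) = A.card * (f (S (i+1)) - f (S i)) := by
      rw [Finset.sum_const, nsmul_eq_mul]
    have h5 : (A.card : ℝ) ≤ k := by
      have : A.card ≤ Sstar.card := Finset.card_le_card (Finset.sdiff_subset)
      rw [hcard] at this
      exact_mod_cast this
    have h6 : (A.card : ℝ) * (f (S (i+1)) - f (S i)) ≤ k * (f (S (i+1)) - f (S i)) :=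
      mul_le_mul_of_nonneg_right h5 gain_nonneg
    calc f Sstar - f (S i) ≤ f (S i ∪ A) - f (S i) := by linarith
      _ ≤ ∑ y ∈ A, (f (insert y (S i)) - f (S i)) := h2
      _ ≤ k * (f (S (i+1)) - f (S i)) := by rw [h4] at h3; linarith
  -- induction: f Sstar - f (S i) ≤ (1 - 1/k)^i * f Sstar
  have main : ∀ i ≤ k, f Sstar - f (S i) ≤ (1 - 1/(k:ℝ))^i * f Sstar := by
    intro i
    induction i with
    | zero => intro _; simp [hS0, hnorm]
    | succ n ih =>
      intro hn
      have hnk : n < k := hn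
      have h1 := ih (le_of_lt hnk)
      have h2 := step n hnk
      have hkne : (k:ℝ) ≠ 0 := ne_of_gt hkpos
      have key : f Sstar - f (S (n+1)) ≤ (1 - 1/(k:ℝ)) * (f Sstar - f (S n)) := by
        have : (1 - 1/(k:ℝ)) * (f Sstar - f (S n))
            = (f Sstar - f (S n)) - (f Sstar - f (S n)) / k := by ring
        rw [this]
        have : (f Sstar - f (S n)) / k ≤ f (S (n+1)) - f (S n) := by
          rw [div_le_iff₀ hkpos]
          linarith [h2]
        linarith
      have hpos : (0:ℝ) ≤ 1 - 1/(k:ℝ) := by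
        have : 1/(k:ℝ) ≤ 1 := by
          rw [div_le_one hkpos]; exact_mod_cast hk1
        linarith
      calc f Sstar - f (S (n+1)) ≤ (1 - 1/(k:ℝ)) * (f Sstar - f (S n)) := key
        _ ≤ (1 - 1/(k:ℝ)) * ((1 - 1/(k:ℝ))^n * f Sstar) :=
            mul_le_mul_of_nonneg_left h1 hpos
        _ = (1 - 1/(k:ℝ))^(n+1) * f Sstar := by ring
  have := main k le_rfl
  nlinarith [this]
end

section
/- Let k ≥ 1 be a natural number, let ε ∈ [0, 1) be a real number, let F ≥ 0 be a real number, and let (a_i)_{i=0}^{k} be a sequence of real numbers with a_0 = 0 such that for every i < k, a_{i+1} − a_i ≥ ((1 − ε)/k) · (F − a_i). Then a_k ≥ (1 − (1 − (1 − ε)/k)^k) · F ≥ (1 − exp(−(1 − ε))) · F ≥ (1 − 1/e − ε) · F. -/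
/-- The deterministic recursion underlying the greedy and lazier-greedy
approximation guarantees: if `a 0 = 0` and each step gains at least a
`(1 - ε)/k` fraction of the remaining gap to `F`, then
`a k ≥ (1 - (1 - (1-ε)/k)^k)·F ≥ (1 - exp(-(1-ε)))·F ≥ (1 - 1/e - ε)·F`. -/
theorem greedy_recursion_chain_bound (k : ℕ) (hk : 1 ≤ k)
    (ε : ℝ) (hε0 : 0 ≤ ε) (hε1 : ε < 1)
    (F : ℝ) (hF : 0 ≤ F)
    (a : ℕ → ℝ) (ha0 : a 0 = 0)
    (hrec : ∀ i < k, a (i + 1) - a i ≥ ((1 - ε) / (k : ℝ)) * (F - a i)) :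
    a k ≥ (1 - (1 - (1 - ε) / (k : ℝ)) ^ k) * F ∧
    (1 - (1 - (1 - ε) / (k : ℝ)) ^ k) * F ≥ (1 - Real.exp (-(1 - ε))) * F ∧
    (1 - Real.exp (-(1 - ε))) * F ≥ (1 - 1 / Real.exp 1 - ε) * F := by
  have hkpos : (0 : ℝ) < k := by exact_mod_cast hk
  set c : ℝ := (1 - ε) / k with hc
  have hc0 : 0 ≤ c := div_nonneg (by linarith) hkpos.le
  have hc1 : c ≤ 1 := by
    rw [hc, div_le_one hkpos]
    have : (1 : ℝ) ≤ k := by exact_mod_cast hk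
    linarith
  set r : ℝ := 1 - c with hr
  have hr0 : 0 ≤ r := by linarith
  -- main induction: F - a i ≤ r^i * F for i ≤ k
  have key : ∀ i ≤ k, F - a i ≤ r ^ i * F := by
    intro i hi
    induction i with
    | zero => simp [ha0]
    | succ n ih =>
      have hn : n < k := Nat.lt_of_succ_le hi
      have ih' := ih hn.le
      have hrec' := hrec n hn
      have : F - a (n + 1) ≤ r * (F - a n) := by
        rw [hr]; nlinarith
      calc F - a (n + 1) ≤ r * (F - a n) := this
        _ ≤ r * (r ^ n * F) := by nlinarith
        _ = r ^ (n + 1) * F := by ring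
  have h1 : a k ≥ (1 - r ^ k) * F := by
    have := key k le_rfl
    nlinarith
  have hexp : r ^ k ≤ Real.exp (-(1 - ε)) := by
    have h1 : r ≤ Real.exp (-c) := by
      have := Real.add_one_le_exp (-c)
      linarith
    calc r ^ k ≤ (Real.exp (-c)) ^ k := pow_le_pow_left₀ hr0 h1 k
      _ = Real.exp ((-c) * k) := by rw [← Real.exp_nat_mul]; ring_nf
      _ = Real.exp (-(1 - ε)) := by
          congr 1
          field_simp [hc]
          rw [hc, div_mul_cancel₀ _ hkpos.ne']
  have h2 : (1 - r ^ k) * F ≥ (1 - Real.exp (-(1 - ε))) * F := by nlinarith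
  have hconv : Real.exp (-(1 - ε)) ≤ (1 - ε) * Real.exp (-1) + ε := by
    have := convexOn_exp.2 (Set.mem_univ (-1 : ℝ)) (Set.mem_univ (0 : ℝ))
      (by linarith : (0:ℝ) ≤ 1 - ε) hε0 (by ring)
    simpa [smul_eq_mul, Real.exp_zero] using this
  have h3 : (1 - Real.exp (-(1 - ε))) * F ≥ (1 - 1 / Real.exp 1 - ε) * F := by
    have he : Real.exp (-1) = 1 / Real.exp 1 := by
      rw [Real.exp_neg]; ring
    have hepos : 0 < Real.exp (-1) := Real.exp_pos _
    nlinarith [hconv, he, mul_nonneg hε0 hepos.le]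
  exact ⟨h1, h2, h3⟩
end

section
/- Let M be an n×n real symmetric positive-definite matrix. For index sets S, T ⊆ {0, …, n−1}, det M(S ∪ T) · det M(S ∩ T) ≤ det M(S) · det M(T), where M(S) denotes the principal submatrix of M with rows and columns indexed by S, and the determinant of the empty (0×0) matrix is 1. Consequently, the set function S ↦ log det M(S) is submodular. -/
/-- The principal submatrix of `M` with rows and columns indexed by the
finite index set `S`. -/
def principalSubmatrix {n : ℕ} (M : Matrix (Fin n) (Fin n) ℝ)
    (S : Finset (Fin n)) : Matrix ↥S ↥S ℝ :=
  M.submatrix (fun i => (i : Fin n)) (fun j => (j : Fin n))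

namespace DetSubmodAux

open Matrix Finset

variable {n : ℕ} (M : Matrix (Fin n) (Fin n) ℝ)

/-- extension of a vector on `↥A` by zero -/
noncomputable def ext0 (A : Finset (Fin n)) (v : ↥A → ℝ) : Fin n → ℝ :=
  fun j => if h : j ∈ A then v ⟨j, h⟩ else 0

lemma ext0_coe (A : Finset (Fin n)) (v : ↥A → ℝ) (j : ↥A) :
    ext0 A v ↑j = v j := by
  simp [ext0, j.2]

lemma ext0_zero (A : Finset (Fin n)) (v : ↥A → ℝ) {j : Fin n} (hj : j ∉ A) :
    ext0 A v j = 0 := by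
  simp [ext0, hj]

lemma restrict_dot (A B : Finset (Fin n)) (hAB : A ⊆ B) (f : Fin n → ℝ) (v : ↥A → ℝ) :
    ∑ j : ↥B, f ↑j * ext0 A v ↑j = ∑ j : ↥A, f ↑j * v j := by
  have h1 : ∑ j : ↥B, f ↑j * ext0 A v ↑j = ∑ j ∈ B, f j * ext0 A v j :=
    Finset.sum_coe_sort B (fun j => f j * ext0 A v j)
  have h2 : ∑ j : ↥A, f ↑j * ext0 A v ↑j = ∑ j ∈ A, f j * ext0 A v j :=
    Finset.sum_coe_sort A (fun j => f j * ext0 A v j)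
  have h3 : ∑ j ∈ A, f j * ext0 A v j = ∑ j ∈ B, f j * ext0 A v j := by
    apply Finset.sum_subset hAB
    intro j _ hj
    rw [ext0_zero A v hj, mul_zero]
  have h4 : ∀ j : ↥A, f ↑j * ext0 A v ↑j = f ↑j * v j := by
    intro j; rw [ext0_coe]
  rw [h1, ← h3, ← h2]
  exact Finset.sum_congr rfl fun j _ => h4 j

lemma restrict_dot_univ (A : Finset (Fin n)) (f : Fin n → ℝ) (v : ↥A → ℝ) :
    ∑ j, f j * ext0 A v j = ∑ j : ↥A, f ↑j * v j := by
  have h3 : ∑ j ∈ A, f j * ext0 A v j = ∑ j, f j * ext0 A v j := by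
    apply Finset.sum_subset (Finset.subset_univ A)
    intro j _ hj
    rw [ext0_zero A v hj, mul_zero]
  rw [← h3, ← Finset.sum_coe_sort A (fun j => f j * ext0 A v j)]
  exact Finset.sum_congr rfl fun j _ => by rw [ext0_coe]

lemma qform_ext0 (A : Finset (Fin n)) (v : ↥A → ℝ) :
    ext0 A v ⬝ᵥ M *ᵥ ext0 A v = v ⬝ᵥ principalSubmatrix M A *ᵥ v := by
  have inner : ∀ i : Fin n, (M *ᵥ ext0 A v) i = ∑ j : ↥A, M i ↑j * v j := by
    intro i
    rw [mulVec, dotProduct]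
    exact restrict_dot_univ A (fun j => M i j) v
  calc ext0 A v ⬝ᵥ M *ᵥ ext0 A v
      = ∑ i, (M *ᵥ ext0 A v) i * ext0 A v i := by
        rw [dotProduct]; exact Finset.sum_congr rfl fun i _ => mul_comm _ _
    _ = ∑ i : ↥A, (M *ᵥ ext0 A v) ↑i * v i := restrict_dot_univ A _ v
    _ = ∑ i : ↥A, v i * ∑ j : ↥A, M ↑i ↑j * v j := by
        refine Finset.sum_congr rfl fun i _ => ?_
        rw [inner, mul_comm]
    _ = v ⬝ᵥ principalSubmatrix M A *ᵥ v := by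
        simp [dotProduct, mulVec, principalSubmatrix]

lemma pd_sub (hpd : M.PosDef) (A : Finset (Fin n)) :
    (principalSubmatrix M A).PosDef := by
  refine posDef_iff_dotProduct_mulVec.mpr ⟨?_, ?_⟩
  · -- Hermitian
    ext i j
    simp only [principalSubmatrix, conjTranspose_apply, submatrix_apply, star_trivial]
    exact hpd.1.apply ..
  · intro x hx
    have hex : ext0 A x ≠ 0 := by
      intro h
      apply hx
      funext i
      have := congrFun h (↑i)
      rwa [ext0_coe] at this
    have := hpd.dotProduct_mulVec_pos hex
    rw [show (star (ext0 A x)) = ext0 A x from funext fun _ => star_trivial _,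
      qform_ext0] at this
    rwa [show (star x) = x from funext fun _ => star_trivial _]

lemma sym_sub (hsymm : M.IsSymm) (A : Finset (Fin n)) :
    (principalSubmatrix M A).IsSymm := by
  ext i j
  simp only [principalSubmatrix, transpose_apply, submatrix_apply]
  exact hsymm.apply ..

/-- the quadratic form `rowₓ M(A)⁻¹ rowₓᵀ` -/
noncomputable def dq (A : Finset (Fin n)) (x : Fin n) : ℝ :=
  (fun i : ↥A => M x ↑i) ⬝ᵥ (principalSubmatrix M A)⁻¹ *ᵥ (fun i : ↥A => M x ↑i)

/-- variational inequality: `2⟨w,v⟩ - vᵀNv ≤ wᵀN⁻¹w` for PD symmetric `N`. -/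
lemma var_ineq {m : Type*} [Fintype m] [DecidableEq m] (N : Matrix m m ℝ)
    (hN : N.PosDef) (hs : N.IsSymm) (w v : m → ℝ) :
    2 * (w ⬝ᵥ v) - v ⬝ᵥ N *ᵥ v ≤ w ⬝ᵥ N⁻¹ *ᵥ w := by
  have hdet : IsUnit N.det := isUnit_iff_ne_zero.mpr hN.det_pos.ne'
  set w' : m → ℝ := N⁻¹ *ᵥ w with hw'
  have hNw' : N *ᵥ w' = w := by
    rw [hw', mulVec_mulVec, Matrix.mul_nonsing_inv N hdet, one_mulVec]
  have key : 0 ≤ (v - w') ⬝ᵥ N *ᵥ (v - w') := by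
    have := hN.posSemidef.dotProduct_mulVec_nonneg (v - w')
    rwa [show (star (v - w')) = v - w' from funext fun _ => star_trivial _] at this
  have expand : (v - w') ⬝ᵥ N *ᵥ (v - w') =
      v ⬝ᵥ N *ᵥ v - 2 * (w ⬝ᵥ v) + w ⬝ᵥ N⁻¹ *ᵥ w := by
    have h1 : w' ⬝ᵥ N *ᵥ v = w ⬝ᵥ v := by
      rw [dotProduct_mulVec, ← Matrix.mulVec_transpose, hs.eq, hNw']
    have h2 : v ⬝ᵥ N *ᵥ w' = w ⬝ᵥ v := by
      rw [hNw', dotProduct_comm]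
    have h3 : w' ⬝ᵥ N *ᵥ w' = w ⬝ᵥ N⁻¹ *ᵥ w := by
      rw [hNw', dotProduct_comm]
    rw [mulVec_sub, dotProduct_sub, sub_dotProduct, sub_dotProduct, h1, h2, h3]
    ring
  linarith [key, expand.symm.le, expand.le]

/-- the variational maximum is attained. -/
lemma var_eq {m : Type*} [Fintype m] [DecidableEq m] (N : Matrix m m ℝ)
    (hN : N.PosDef) (w : m → ℝ) :
    2 * (w ⬝ᵥ (N⁻¹ *ᵥ w)) - (N⁻¹ *ᵥ w) ⬝ᵥ N *ᵥ (N⁻¹ *ᵥ w) = w ⬝ᵥ N⁻¹ *ᵥ w := by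
  have hdet : IsUnit N.det := isUnit_iff_ne_zero.mpr hN.det_pos.ne'
  have hNw' : N *ᵥ (N⁻¹ *ᵥ w) = w := by
    rw [mulVec_mulVec, Matrix.mul_nonsing_inv N hdet, one_mulVec]
  rw [hNw', dotProduct_comm (N⁻¹ *ᵥ w) w]
  ring

lemma dq_mono (hpd : M.PosDef) (hsymm : M.IsSymm) {A B : Finset (Fin n)}
    (hAB : A ⊆ B) (x : Fin n) : dq M A x ≤ dq M B x := by
  set NA := principalSubmatrix M A with hNA
  set NB := principalSubmatrix M B with hNB
  set wA : ↥A → ℝ := fun i => M x ↑i with hwA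
  set wB : ↥B → ℝ := fun i => M x ↑i with hwB
  set v : ↥A → ℝ := NA⁻¹ *ᵥ wA with hv
  set vB : ↥B → ℝ := fun j => ext0 A v ↑j with hvB
  have claim1 : wB ⬝ᵥ vB = wA ⬝ᵥ v := by
    rw [dotProduct, dotProduct]
    exact restrict_dot A B hAB (fun j => M x j) v
  have inner : ∀ i : ↥B, (NB *ᵥ vB) i = ∑ j : ↥A, M ↑i ↑j * v j := by
    intro i
    rw [mulVec, dotProduct]
    exact restrict_dot A B hAB (fun j => M ↑i j) v
  have claim2 : vB ⬝ᵥ NB *ᵥ vB = v ⬝ᵥ NA *ᵥ v := by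
    calc vB ⬝ᵥ NB *ᵥ vB = ∑ i : ↥B, (NB *ᵥ vB) i * vB i := by
          rw [dotProduct]; exact Finset.sum_congr rfl fun i _ => mul_comm _ _
      _ = ∑ i : ↥B, (fun t => ∑ j : ↥A, M t ↑j * v j) ↑i * ext0 A v ↑i := by
          refine Finset.sum_congr rfl fun i _ => ?_
          rw [inner i]
      _ = ∑ i : ↥A, (fun t => ∑ j : ↥A, M t ↑j * v j) ↑i * v i :=
          restrict_dot A B hAB (fun t => ∑ j : ↥A, M t ↑j * v j) v
      _ = v ⬝ᵥ NA *ᵥ v := by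
          simp only [dotProduct, mulVec, principalSubmatrix, submatrix_apply, hNA]
          exact Finset.sum_congr rfl fun i _ => mul_comm _ _
  have h1 : dq M A x = 2 * (wB ⬝ᵥ vB) - vB ⬝ᵥ NB *ᵥ vB := by
    rw [claim1, claim2, hv]
    exact (var_eq NA (pd_sub M hpd A) wA).symm
  have h2 := var_ineq NB (pd_sub M hpd B) (sym_sub M hsymm B) wB vB
  rw [h1]
  exact h2

lemma det_insert (hpd : M.PosDef) (hsymm : M.IsSymm) (A : Finset (Fin n))
    {x : Fin n} (hx : x ∉ A) :
    (principalSubmatrix M (insert x A)).det =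
      (principalSubmatrix M A).det * (M x x - dq M A x) := by
  set D := principalSubmatrix M A with hD
  haveI : Invertible D := D.invertibleOfIsUnitDet
    (isUnit_iff_ne_zero.mpr (pd_sub M hpd A).det_pos.ne')
  -- equivalence Unit ⊕ ↥A ≃ ↥(insert x A)
  let e : Unit ⊕ ↥A ≃ ↥(insert x A) :=
    { toFun := Sum.elim (fun _ => ⟨x, Finset.mem_insert_self x A⟩)
        (fun a => ⟨↑a, Finset.mem_insert_of_mem a.2⟩)
      invFun := fun j => if h : (j : Fin n) ∈ A then Sum.inr ⟨↑j, h⟩ else Sum.inl ()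
      left_inv := by
        rintro (⟨⟩ | a)
        · simp [hx]
        · simp [a.2]
      right_inv := by
        rintro ⟨j, hj⟩
        rcases Finset.mem_insert.mp hj with h | h
        · subst h; simp [hx]
        · simp [h] }
  have hblock : (principalSubmatrix M (insert x A)).submatrix e e =
      Matrix.fromBlocks (Matrix.of fun _ _ => M x x)
        (Matrix.of fun _ (j : ↥A) => M x ↑j)
        (Matrix.of fun (i : ↥A) _ => M ↑i x) D := by
    ext i j
    rcases i with ⟨⟩ | i <;> rcases j with ⟨⟩ | j <;>
      simp [principalSubmatrix, e, hD]
  have hdet1 : (principalSubmatrix M (insert x A)).det =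
      ((principalSubmatrix M (insert x A)).submatrix e e).det :=
    (Matrix.det_submatrix_equiv_self e _).symm
  rw [hdet1, hblock, Matrix.det_fromBlocks₂₂, invOf_eq_nonsing_inv]
  congr 1
  rw [det_unique]
  simp only [Matrix.sub_apply, of_apply]
  congr 1
  -- (B * D⁻¹ * C) () () = dq M A x
  simp only [Matrix.mul_apply, of_apply, Finset.sum_mul]
  rw [Finset.sum_comm]
  rw [dq, dotProduct]
  refine Finset.sum_congr rfl fun j _ => ?_
  simp only [mulVec, dotProduct, Finset.mul_sum]
  refine Finset.sum_congr rfl fun i _ => ?_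
  rw [hsymm.apply x ↑i]
  ring

lemma ratio_pos (hpd : M.PosDef) (hsymm : M.IsSymm) (A : Finset (Fin n))
    {x : Fin n} (hx : x ∉ A) : 0 < M x x - dq M A x := by
  have h := (pd_sub M hpd (insert x A)).det_pos
  rw [det_insert M hpd hsymm A hx] at h
  rcases mul_pos_iff.mp h with ⟨_, h2⟩ | ⟨h1, _⟩
  · exact h2
  · exact absurd (pd_sub M hpd A).det_pos (not_lt.mpr h1.le)

lemma det_diminish (hpd : M.PosDef) (hsymm : M.IsSymm) {S T : Finset (Fin n)}
    (hST : S ⊆ T) {x : Fin n} (hx : x ∉ T) :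
    (principalSubmatrix M (insert x T)).det * (principalSubmatrix M S).det ≤
      (principalSubmatrix M (insert x S)).det * (principalSubmatrix M T).det := by
  have hxS : x ∉ S := fun h => hx (hST h)
  rw [det_insert M hpd hsymm T hx, det_insert M hpd hsymm S hxS]
  have hdq := dq_mono M hpd hsymm hST x
  have hS := (pd_sub M hpd S).det_pos
  have hT := (pd_sub M hpd T).det_pos
  nlinarith [mul_pos hS hT]

lemma det_general (hpd : M.PosDef) (hsymm : M.IsSymm) (S : Finset (Fin n))
    (D : Finset (Fin n)) (hdisj : ∀ y ∈ D, y ∉ S) :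
    ∀ A ⊆ S,
      (principalSubmatrix M (S ∪ D)).det * (principalSubmatrix M A).det ≤
        (principalSubmatrix M S).det * (principalSubmatrix M (A ∪ D)).det := by
  induction D using Finset.induction_on with
  | empty => intro A _; rw [Finset.union_empty, Finset.union_empty, mul_comm]
  | @insert x D hxD ih =>
    intro A hA
    have hxS : x ∉ S := hdisj x (Finset.mem_insert_self x D)
    have hdisj' : ∀ y ∈ D, y ∉ S := fun y hy => hdisj y (Finset.mem_insert_of_mem hy)
    have hxSD : x ∉ S ∪ D := by
      simp only [Finset.mem_union, not_or]
      exact ⟨hxS, hxD⟩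
    have hsub : A ∪ D ⊆ S ∪ D := Finset.union_subset_union hA (le_refl D)
    have h1 := det_diminish M hpd hsymm hsub hxSD
    have h2 := ih hdisj' A hA
    have hb := (pd_sub M hpd (S ∪ D)).det_pos
    have hd := (pd_sub M hpd (A ∪ D)).det_pos
    have hc := (pd_sub M hpd (insert x (A ∪ D))).det_pos
    have hf := (pd_sub M hpd S).det_pos
    have he := (pd_sub M hpd A).det_pos
    rw [Finset.union_insert]
    rw [Finset.union_insert] at *
    set a := (principalSubmatrix M (insert x (S ∪ D))).det
    set b := (principalSubmatrix M (S ∪ D)).det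
    set c := (principalSubmatrix M (insert x (A ∪ D))).det
    set d := (principalSubmatrix M (A ∪ D)).det
    set e := (principalSubmatrix M A).det
    set f := (principalSubmatrix M S).det
    -- h1 : a * d ≤ c * b, h2 : b * e ≤ f * d; want a * e ≤ f * c
    have k1 : a * d * e ≤ c * b * e := mul_le_mul_of_nonneg_right h1 he.le
    have k2 : c * (b * e) ≤ c * (f * d) := mul_le_mul_of_nonneg_left h2 hc.le
    nlinarith [hd]

end DetSubmodAux

open DetSubmodAux in
/-- For a symmetric positive-definite matrix `M`,
`det M(S ∪ T) · det M(S ∩ T) ≤ det M(S) · det M(T)`; consequently,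
`S ↦ log det M(S)` is submodular. -/
theorem det_principal_submatrix_submodular {n : ℕ}
    (M : Matrix (Fin n) (Fin n) ℝ) (hsymm : M.IsSymm) (hpd : M.PosDef) :
    (∀ S T : Finset (Fin n),
      (principalSubmatrix M (S ∪ T)).det * (principalSubmatrix M (S ∩ T)).det ≤
        (principalSubmatrix M S).det * (principalSubmatrix M T).det) ∧
    (∀ S T : Finset (Fin n), S ⊆ T → ∀ x ∉ T,
      Real.log (principalSubmatrix M (insert x S)).det -
          Real.log (principalSubmatrix M S).det ≥
        Real.log (principalSubmatrix M (insert x T)).det -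
          Real.log (principalSubmatrix M T).det) := by
  constructor
  · intro S T
    have key := det_general M hpd hsymm S (T \ S)
      (fun y hy => (Finset.mem_sdiff.mp hy).2) (S ∩ T) Finset.inter_subset_left
    rwa [Finset.union_sdiff_self_eq_union,
      show S ∩ T ∪ T \ S = T by
        rw [Finset.inter_comm, Finset.union_comm]
        exact Finset.sdiff_union_inter T S] at key
  · intro S T hST x hx
    have hxS : x ∉ S := fun h => hx (hST h)
    have h := det_diminish M hpd hsymm hST hx
    have ha := (pd_sub M hpd (insert x S)).det_pos
    have he := (pd_sub M hpd S).det_pos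
    have hc := (pd_sub M hpd (insert x T)).det_pos
    have hf := (pd_sub M hpd T).det_pos
    rw [ge_iff_le, ← Real.log_div hc.ne' hf.ne', ← Real.log_div ha.ne' he.ne']
    apply Real.log_le_log (div_pos hc hf)
    rw [div_le_div_iff₀ hf he]
    linarith [h]
end

section
/- Let A be an n×n real matrix, L an invertible n×n lower-triangular real matrix with L Lᵀ = A, B an n×p real matrix, and D a p×p real matrix. Define L₁ = L⁻¹ B, and let L₂ be any p×p real matrix satisfying L₂ L₂ᵀ = D − L₁ᵀ L₁. Then the block matrix L' = [[L, 0], [L₁ᵀ, L₂]] satisfies L' L'ᵀ = [[A, B], [Bᵀ, D]]; moreover, if L₂ is lower triangular, then L' is lower triangular. In particular, appending rows and columns to a symmetric positive-definite matrix allows its Cholesky factor to be updated incrementally: the new factor extends the old factor L by the blocks L₁ᵀ and L₂. -/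
open Matrix
/-- Incremental Cholesky update: if `L Lᵀ = A` with `L` invertible lower
triangular, `L₁ = L⁻¹ B`, and `L₂ L₂ᵀ = D - L₁ᵀ L₁`, then the block matrix
`L' = [[L, 0], [L₁ᵀ, L₂]]` satisfies `L' L'ᵀ = [[A, B], [Bᵀ, D]]`; moreover,
if `L₂` is lower triangular then so is `L'`. -/
theorem cholesky_incremental_update {n p : ℕ}
    (A : Matrix (Fin n) (Fin n) ℝ) (L : Matrix (Fin n) (Fin n) ℝ)
    (B : Matrix (Fin n) (Fin p) ℝ) (D : Matrix (Fin p) (Fin p) ℝ)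
    (L₁ : Matrix (Fin n) (Fin p) ℝ) (L₂ : Matrix (Fin p) (Fin p) ℝ)
    (hLlow : ∀ i j : Fin n, i < j → L i j = 0)
    (hLinv : IsUnit L)
    (hchol : L * Lᵀ = A)
    (hL1 : L₁ = L⁻¹ * B)
    (hL2 : L₂ * L₂ᵀ = D - L₁ᵀ * L₁) :
    (Matrix.fromBlocks L 0 L₁ᵀ L₂) * (Matrix.fromBlocks L 0 L₁ᵀ L₂)ᵀ =
      Matrix.fromBlocks A B Bᵀ D ∧
    ((∀ i j : Fin p, i < j → L₂ i j = 0) →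
      ∀ i j : Fin (n + p), i < j →
        (Matrix.reindex finSumFinEquiv finSumFinEquiv
          (Matrix.fromBlocks L 0 L₁ᵀ L₂)) i j = 0) := by
  have hLB : L * L₁ = B := by
    rw [hL1, ← Matrix.mul_assoc, Matrix.mul_nonsing_inv _ ((Matrix.isUnit_iff_isUnit_det L).mp hLinv),
      Matrix.one_mul]
  constructor
  · rw [Matrix.fromBlocks_transpose, Matrix.fromBlocks_multiply]
    simp [hchol, hLB, hL2, ← Matrix.transpose_mul, Matrix.mul_assoc]
  · intro hL2low i j hij
    rw [Matrix.reindex_apply]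
    rcases hi : finSumFinEquiv.symm i with a | a <;>
      rcases hj : finSumFinEquiv.symm j with b | b <;>
      simp only [Matrix.submatrix_apply, hi, hj, Matrix.fromBlocks_apply₁₁,
        Matrix.fromBlocks_apply₁₂, Matrix.fromBlocks_apply₂₁,
        Matrix.fromBlocks_apply₂₂]
    · apply hLlow
      have := hij
      rw [← Equiv.apply_symm_apply finSumFinEquiv i,
        ← Equiv.apply_symm_apply finSumFinEquiv j, hi, hj] at this
      simpa only [Fin.lt_def, finSumFinEquiv_apply_left, finSumFinEquiv_apply_right,
        Fin.coe_castAdd] using this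
    · rfl
    · exfalso
      rw [← Equiv.apply_symm_apply finSumFinEquiv i,
        ← Equiv.apply_symm_apply finSumFinEquiv j, hi, hj] at hij
      simp only [Fin.lt_def, finSumFinEquiv_apply_left, finSumFinEquiv_apply_right,
        Fin.coe_castAdd, Fin.coe_natAdd] at hij
      omega
    · apply hL2low
      rw [← Equiv.apply_symm_apply finSumFinEquiv i,
        ← Equiv.apply_symm_apply finSumFinEquiv j, hi, hj] at hij
      simp only [Fin.lt_def, finSumFinEquiv_apply_right, Fin.coe_natAdd] at hij
      exact Fin.lt_def.mpr (by omega)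
end

section
/- Let V be a finite set with |V| = m, let A ⊆ V be nonempty with |A| = a, let g : V → ℝ be a nonnegative function, and let 1 ≤ s ≤ m. If R is a uniformly random s-element subset of V, then E[ max_{x ∈ R} g(x) ] ≥ (1 − C(m − a, s)/C(m, s)) · (1/a) · Σ_{x ∈ A} g(x), where C(·,·) denotes the binomial coefficient. In words: the expected maximum of g over a uniformly random s-subset is at least the probability that the subset meets A times the average of g over A. -/
open Finset in
private lemma swap_image_self' {V : Type*} [DecidableEq V] (A : Finset V) {x y : V}
    (hx : x ∈ A) (hy : y ∈ A) : A.image (Equiv.swap x y) = A := by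
  apply Finset.eq_of_subset_of_card_le
  · intro z hz
    simp only [Finset.mem_image] at hz
    obtain ⟨w, hw, rfl⟩ := hz
    rcases eq_or_ne w x with rfl | hwx
    · simpa using hy
    rcases eq_or_ne w y with rfl | hwy
    · simpa using hx
    · rwa [Equiv.swap_apply_of_ne_of_ne hwx hwy]
  · rw [Finset.card_image_of_injective _ (Equiv.injective _)]

open Finset in
private lemma swap_inter_card' {V : Type*} [DecidableEq V] (A R : Finset V) {x y : V}
    (hx : x ∈ A) (hy : y ∈ A) :
    ((R.image (Equiv.swap x y)) ∩ A).card = (R ∩ A).card := by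
  conv_lhs => rw [← swap_image_self' A hx hy]
  rw [← Finset.image_inter _ _ (Equiv.injective _),
    Finset.card_image_of_injective _ (Equiv.injective _)]

open Finset in
private lemma c_symm' {V : Type*} [DecidableEq V] [Fintype V] (A : Finset V) {x y : V}
    (hx : x ∈ A) (hy : y ∈ A) (s : ℕ) :
    ∑ R ∈ (Finset.univ : Finset V).powersetCard s,
        (if x ∈ R then (1 : ℝ) / ((R ∩ A).card : ℝ) else 0) =
      ∑ R ∈ (Finset.univ : Finset V).powersetCard s,
        (if y ∈ R then (1 : ℝ) / ((R ∩ A).card : ℝ) else 0) := by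
  apply Finset.sum_nbij' (fun R => R.image (Equiv.swap x y))
    (fun R => R.image (Equiv.swap x y))
  · intro R hR
    simp only [Finset.mem_powersetCard_univ] at hR ⊢
    rw [Finset.card_image_of_injective _ (Equiv.injective _)]; exact hR
  · intro R hR
    simp only [Finset.mem_powersetCard_univ] at hR ⊢
    rw [Finset.card_image_of_injective _ (Equiv.injective _)]; exact hR
  · intro R _
    rw [Finset.image_image]
    simp [Function.comp_def]
  · intro R _
    rw [Finset.image_image]
    simp [Function.comp_def]
  · intro R _
    have hmem : y ∈ R.image (Equiv.swap x y) ↔ x ∈ R := by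
      simp only [Finset.mem_image]
      constructor
      · rintro ⟨w, hw, hwy⟩
        have hwx : w = x := by
          apply (Equiv.swap x y).injective (a₁ := w) (a₂ := x)
          rw [hwy, Equiv.swap_apply_left]
        rwa [← hwx]
      · intro hxR
        exact ⟨x, hxR, Equiv.swap_apply_left x y⟩
    simp only [hmem, swap_inter_card' A R hx hy]

open Finset in
private lemma sum_c' {V : Type*} [DecidableEq V] [Fintype V] (A : Finset V) (s : ℕ) :
    ∑ x ∈ A, ∑ R ∈ (univ : Finset V).powersetCard s,
        (if x ∈ R then (1 : ℝ) / ((R ∩ A).card : ℝ) else 0) =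
      (((univ : Finset V).powersetCard s).filter (fun R => (R ∩ A).Nonempty)).card := by
  rw [Finset.sum_comm, Finset.card_filter]
  push_cast
  apply Finset.sum_congr rfl
  intro R _
  rw [Finset.sum_ite_mem, Finset.sum_const, Finset.inter_comm A R]
  rcases (R ∩ A).eq_empty_or_nonempty with h | h
  · simp [Finset.inter_comm R A ▸ h, h]
  · have hc : ((R ∩ A).card : ℝ) ≠ 0 := by
      exact_mod_cast Finset.card_ne_zero_of_mem h.choose_spec
    rw [nsmul_eq_mul, if_pos h]
    field_simp

open Finset in
private lemma count_meet' {V : Type*} [DecidableEq V] [Fintype V] (A : Finset V) (s : ℕ) :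
    (((univ : Finset V).powersetCard s).filter (fun R => (R ∩ A).Nonempty)).card =
      (Fintype.card V).choose s - (Fintype.card V - A.card).choose s := by
  have h1 : (((univ : Finset V).powersetCard s).filter (fun R => ¬(R ∩ A).Nonempty)) =
      ((univ : Finset V) \ A).powersetCard s := by
    ext R
    simp only [Finset.mem_filter, Finset.mem_powersetCard_univ, Finset.mem_powersetCard,
      Finset.not_nonempty_iff_eq_empty, Finset.subset_sdiff, Finset.subset_univ, true_and]
    rw [← Finset.disjoint_iff_inter_eq_empty]
    tauto
  have h2 := Finset.card_filter_add_card_filter_not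
    (s := (univ : Finset V).powersetCard s) (p := fun R => (R ∩ A).Nonempty)
  rw [h1] at h2
  rw [Finset.card_powersetCard, Finset.card_powersetCard, Finset.card_sdiff_of_subset
    (Finset.subset_univ A), Finset.card_univ] at h2
  omega

/-- Maximum of `g` over a finite set `R` (`0` if `R` is empty). -/
noncomputable def maxOver {V : Type*} (R : Finset V) (g : V → ℝ) : ℝ :=
  if h : R.Nonempty then R.sup' h g else 0

/-- The expected maximum of a nonnegative function `g` over a uniformly random
`s`-element subset `R` of an `m`-element set `V` is at least the probability
that `R` meets `A` (which is at least `1 - C(m-a, s)/C(m, s)`) times the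
average of `g` over `A`. -/
theorem expected_max_over_random_subset
    {V : Type*} [Fintype V] [DecidableEq V]
    (m : ℕ) (hm : Fintype.card V = m)
    (A : Finset V) (hA : A.Nonempty) (a : ℕ) (ha : A.card = a)
    (g : V → ℝ) (hg : ∀ x : V, 0 ≤ g x)
    (s : ℕ) (hs1 : 1 ≤ s) (hsm : s ≤ m) :
    (∑ R ∈ (Finset.univ : Finset V).powersetCard s, maxOver R g) /
        (m.choose s : ℝ) ≥
      (1 - ((m - a).choose s : ℝ) / (m.choose s : ℝ)) *
        ((1 / (a : ℝ)) * ∑ x ∈ A, g x) := by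
  classical
  set P := (Finset.univ : Finset V).powersetCard s with hP
  have hmax0 : ∀ R : Finset V, 0 ≤ maxOver R g := by
    intro R
    unfold maxOver
    split
    · rename_i h
      obtain ⟨z, hz⟩ := h
      exact le_trans (hg z) (Finset.le_sup' g hz)
    · exact le_refl 0
  -- pointwise bound
  have hpoint : ∀ R ∈ P, ∑ x ∈ A, (if x ∈ R then g x / ((R ∩ A).card : ℝ) else 0)
      ≤ maxOver R g := by
    intro R _
    rw [Finset.sum_ite_mem]
    rcases (A ∩ R).eq_empty_or_nonempty with h | h
    · simp [h, hmax0 R]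
    · obtain ⟨z, hz⟩ := h
      have hzR : z ∈ R := (Finset.mem_inter.mp hz).2
      have hRne : R.Nonempty := ⟨z, hzR⟩
      have hM : maxOver R g = R.sup' hRne g := by unfold maxOver; rw [dif_pos hRne]
      have hcards : ((A ∩ R).card : ℝ) = ((R ∩ A).card : ℝ) := by rw [Finset.inter_comm]
      have hcpos : (0 : ℝ) < ((R ∩ A).card : ℝ) := by
        have hne : (R ∩ A).Nonempty := ⟨z, by rw [Finset.inter_comm]; exact hz⟩
        exact_mod_cast Finset.card_pos.mpr hne
      have hsum : ∑ x ∈ A ∩ R, g x ≤ (A ∩ R).card • R.sup' hRne g :=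
        Finset.sum_le_card_nsmul _ _ _ (fun x hx => Finset.le_sup' g (Finset.mem_inter.mp hx).2)
      rw [nsmul_eq_mul] at hsum
      rw [hM]
      have : ∑ x ∈ A ∩ R, g x / ((R ∩ A).card : ℝ)
          = (∑ x ∈ A ∩ R, g x) / ((R ∩ A).card : ℝ) := by rw [Finset.sum_div]
      rw [this, div_le_iff₀ hcpos]
      calc ∑ x ∈ A ∩ R, g x ≤ ((A ∩ R).card : ℝ) * R.sup' hRne g := hsum
        _ = R.sup' hRne g * ((R ∩ A).card : ℝ) := by rw [hcards]; ring
  -- the coefficient c x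
  set c : V → ℝ := fun x => ∑ R ∈ P, (if x ∈ R then (1 : ℝ) / ((R ∩ A).card : ℝ) else 0)
    with hc
  have hstep : ∑ x ∈ A, g x * c x ≤ ∑ R ∈ P, maxOver R g := by
    have h1 : ∑ x ∈ A, g x * c x = ∑ R ∈ P, ∑ x ∈ A,
        (if x ∈ R then g x / ((R ∩ A).card : ℝ) else 0) := by
      rw [Finset.sum_comm]
      apply Finset.sum_congr rfl
      intro x _
      rw [hc, Finset.mul_sum]
      apply Finset.sum_congr rfl
      intro R _
      split <;> simp [div_eq_mul_inv]
    rw [h1]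
    exact Finset.sum_le_sum hpoint
  -- c is constant on A
  obtain ⟨x0, hx0⟩ := hA
  have hconst : ∀ x ∈ A, c x = c x0 := fun x hx => c_symm' A hx hx0 s
  -- total of c over A
  set N : ℕ := m.choose s - (m - a).choose s with hNdef
  have hCC' : (m - a).choose s ≤ m.choose s := Nat.choose_le_choose s (Nat.sub_le m a)
  have hNcast : (N : ℝ) = (m.choose s : ℝ) - ((m - a).choose s : ℝ) := by
    rw [hNdef, Nat.cast_sub hCC']
  have hsumc : ∑ x ∈ A, c x = (N : ℝ) := by
    rw [hc]
    rw [sum_c' A s, count_meet' A s, hm, ha]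
  have hapos : (0 : ℝ) < (a : ℝ) := by
    have : 0 < A.card := Finset.card_pos.mpr ⟨x0, hx0⟩
    exact_mod_cast ha ▸ this
  have hcx0 : c x0 = (N : ℝ) / (a : ℝ) := by
    have h2 : ∑ x ∈ A, c x = (a : ℝ) * c x0 := by
      rw [Finset.sum_congr rfl hconst, Finset.sum_const, ha, nsmul_eq_mul]
    rw [h2] at hsumc
    field_simp at hsumc ⊢
    linarith
  -- lower bound on the big sum
  set T : ℝ := ∑ x ∈ A, g x with hT
  have hT0 : 0 ≤ T := Finset.sum_nonneg (fun x _ => hg x)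
  have hbig : T * ((N : ℝ) / (a : ℝ)) ≤ ∑ R ∈ P, maxOver R g := by
    have : ∑ x ∈ A, g x * c x = T * ((N : ℝ) / (a : ℝ)) := by
      rw [hT, Finset.sum_mul]
      apply Finset.sum_congr rfl
      intro x hx
      rw [hconst x hx, hcx0]
    linarith [hstep, this.symm.le]
  -- final algebra
  have hCpos : (0 : ℝ) < (m.choose s : ℝ) := by exact_mod_cast Nat.choose_pos hsm
  rw [ge_iff_le]
  have hrhs : (1 - ((m - a).choose s : ℝ) / (m.choose s : ℝ)) * ((1 / (a : ℝ)) * T)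
      = (T * ((N : ℝ) / (a : ℝ))) / (m.choose s : ℝ) := by
    rw [hNcast]
    field_simp
  rw [hrhs]
  gcongr
end

section
/- Let V be a finite ground set with |V| = m, let f be a normalized, monotone, submodular set function on V, and let 1 ≤ k ≤ m. Consider the random-sampling process: S_0 = ∅ and, for each i < k, sample x_i uniformly at random from V \ S_i (independently of previous samples given S_i) and set S_{i+1} = S_i ∪ {x_i}. Let S* be a subset of V of cardinality k maximizing f among all subsets of cardinality k. Then E[ f(S_k) ] ≥ (1 − 1/e − exp(−k/m)) · f(S*). -/
/-- One step of the random-sampling process: from the current set `S`, add an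
element sampled uniformly at random from `V \ S`; if `V \ S` is empty, stay
at `S`. -/
noncomputable def randomSampleStep {V : Type*} [Fintype V] [DecidableEq V]
    (S : Finset V) : PMF (Finset V) :=
  if h : (Finset.univ \ S).Nonempty then
    (PMF.uniformOfFinset _ h).map (fun x => insert x S)
  else PMF.pure S

/-- The random-sampling process after `i` steps, started from `∅`. -/
noncomputable def randomSampleProc (V : Type*) [Fintype V] [DecidableEq V] :
    ℕ → PMF (Finset V)
  | 0 => PMF.pure ∅
  | i + 1 => (randomSampleProc V i).bind randomSampleStep

section Aux

variable {α β : Type*}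

lemma pmf_sum_toReal_eq_one [Fintype α] (p : PMF α) :
    ∑ a : α, (p a).toReal = 1 := by
  have h := p.tsum_coe
  rw [tsum_fintype] at h
  have := ENNReal.toReal_sum (s := Finset.univ) (f := fun a => p a)
    (fun a _ => p.apply_ne_top a)
  rw [h] at this
  simpa using this.symm

lemma pmf_bind_exp [Fintype α] [Fintype β] (p : PMF α) (q : α → PMF β) (f : β → ℝ) :
    ∑ b : β, ((p.bind q) b).toReal * f b
      = ∑ a : α, (p a).toReal * ∑ b : β, ((q a) b).toReal * f b := by
  have hb : ∀ b, ((p.bind q) b).toReal = ∑ a : α, (p a).toReal * ((q a) b).toReal := by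
    intro b
    rw [PMF.bind_apply, tsum_fintype,
      ENNReal.toReal_sum (fun a _ => ENNReal.mul_ne_top (p.apply_ne_top a) ((q a).apply_ne_top b))]
    exact Finset.sum_congr rfl fun a _ => ENNReal.toReal_mul
  calc ∑ b : β, ((p.bind q) b).toReal * f b
      = ∑ b : β, ∑ a : α, (p a).toReal * (((q a) b).toReal * f b) := by
        refine Finset.sum_congr rfl fun b _ => ?_
        rw [hb, Finset.sum_mul]
        exact Finset.sum_congr rfl fun a _ => mul_assoc _ _ _
    _ = ∑ a : α, ∑ b : β, (p a).toReal * (((q a) b).toReal * f b) := Finset.sum_comm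
    _ = ∑ a : α, (p a).toReal * ∑ b : β, ((q a) b).toReal * f b := by
        refine Finset.sum_congr rfl fun a _ => ?_
        rw [Finset.mul_sum]

lemma pmf_map_exp [Fintype α] [Fintype β] [DecidableEq β] (p : PMF α) (g : α → β) (f : β → ℝ) :
    ∑ b : β, ((p.map g) b).toReal * f b = ∑ a : α, (p a).toReal * f (g a) := by
  have hb : ∀ b, ((p.map g) b).toReal = ∑ a : α, (if b = g a then (p a).toReal else 0) := by
    intro b
    rw [PMF.map_apply, tsum_fintype,
      ENNReal.toReal_sum (fun a _ => by split <;> simp [p.apply_ne_top a])]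
    refine Finset.sum_congr rfl fun a _ => ?_
    split <;> simp
  calc ∑ b : β, ((p.map g) b).toReal * f b
      = ∑ b : β, ∑ a : α, (if b = g a then (p a).toReal * f b else 0) := by
        refine Finset.sum_congr rfl fun b _ => ?_
        rw [hb, Finset.sum_mul]
        refine Finset.sum_congr rfl fun a _ => ?_
        split <;> simp
    _ = ∑ a : α, ∑ b : β, (if b = g a then (p a).toReal * f b else 0) := Finset.sum_comm
    _ = ∑ a : α, (p a).toReal * f (g a) := by
        refine Finset.sum_congr rfl fun a _ => ?_
        rw [Finset.sum_ite_eq' Finset.univ (g a) (fun b => (p a).toReal * f b)]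
        simp

end Aux

section Submod

variable {V : Type*} [Fintype V] [DecidableEq V]

lemma submod_telescope (f : Finset V → ℝ)
    (hsub : ∀ S T : Finset V, S ⊆ T → ∀ x ∉ T,
      f (insert x S) - f S ≥ f (insert x T) - f T)
    (S : Finset V) :
    ∀ A : Finset V, f (A ∪ S) ≤ f S + ∑ x ∈ A \ S, (f (insert x S) - f S) := by
  intro A
  induction A using Finset.induction_on with
  | empty => simp
  | @insert a A' ha ih =>
    by_cases haS : a ∈ S
    · rw [Finset.insert_union, Finset.insert_eq_self.2 (Finset.mem_union_right _ haS),
        Finset.insert_sdiff_of_mem _ haS]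
      exact ih
    · have haAS : a ∉ A' ∪ S := by simp [ha, haS]
      have h1 := hsub S (A' ∪ S) Finset.subset_union_right a haAS
      have h2 : (insert a A') \ S = insert a (A' \ S) := by
        rw [Finset.insert_sdiff_of_notMem _ haS]
      rw [Finset.insert_union, h2, Finset.sum_insert (by simp [ha])]
      linarith

end Submod

/-- Random sampling (lazier greedy with a single random candidate per
iteration) achieves a `(1 - 1/e - exp(-k/m))` approximation guarantee in
expectation for maximizing a normalized, monotone, submodular set function
under a cardinality constraint `k`. -/
theorem random_sampling_expectation_bound
    {V : Type*} [Fintype V] [DecidableEq V]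
    (m : ℕ) (hm : Fintype.card V = m)
    (f : Finset V → ℝ)
    (hnorm : f ∅ = 0)
    (hmono : ∀ S T : Finset V, S ⊆ T → f S ≤ f T)
    (hsub : ∀ S T : Finset V, S ⊆ T → ∀ x ∉ T,
      f (insert x S) - f S ≥ f (insert x T) - f T)
    (k : ℕ) (hk1 : 1 ≤ k) (hkm : k ≤ m)
    (Sstar : Finset V) (hcard : Sstar.card = k)
    (hopt : ∀ T : Finset V, T.card = k → f T ≤ f Sstar) :
    (1 - 1 / Real.exp 1 - Real.exp (-(k : ℝ) / (m : ℝ))) * f Sstar ≤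
      ∑ S : Finset V, ((randomSampleProc V k) S).toReal * f S := by
  have hm1 : 1 ≤ m := le_trans hk1 hkm
  have hmR : (1 : ℝ) ≤ (m : ℝ) := by exact_mod_cast hm1
  have hmpos : (0 : ℝ) < (m : ℝ) := by linarith
  have hfstar : 0 ≤ f Sstar := by
    have := hmono ∅ Sstar (Finset.empty_subset _)
    linarith [hnorm ▸ this]
  -- per-state step bound
  have step_bound : ∀ S : Finset V,
      f S + (1 / m) * (f Sstar - f S)
        ≤ ∑ T : Finset V, ((randomSampleStep S) T).toReal * f T := by
    intro S
    by_cases h : (Finset.univ \ S : Finset V).Nonempty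
    · rw [randomSampleStep, dif_pos h,
        pmf_map_exp (PMF.uniformOfFinset _ h) (fun x => insert x S) f]
      have hcardpos : 0 < ((Finset.univ \ S : Finset V).card : ℝ) := by
        exact_mod_cast Finset.card_pos.2 h
      have hcardle : ((Finset.univ \ S : Finset V).card : ℝ) ≤ (m : ℝ) := by
        exact_mod_cast hm ▸ (Finset.card_le_card (Finset.subset_univ _)).trans_eq
          (Finset.card_univ)
      -- rewrite the expectation as an explicit sum over univ \ S
      have hsum : ∑ x : V, ((PMF.uniformOfFinset _ h) x).toReal * f (insert x S)
          = (((Finset.univ \ S : Finset V).card : ℝ))⁻¹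
              * ∑ x ∈ Finset.univ \ S, f (insert x S) := by
        rw [Finset.mul_sum]
        rw [← Finset.sum_subset (Finset.subset_univ (Finset.univ \ S))]
        · refine Finset.sum_congr rfl fun x hx => ?_
          rw [PMF.uniformOfFinset_apply, if_pos hx]
          simp
        · intro x _ hx
          rw [PMF.uniformOfFinset_apply, if_neg hx]
          simp
      rw [hsum]
      -- lower bound the total marginal gain
      have hmarg_nonneg : ∀ x ∈ Finset.univ \ S, 0 ≤ f (insert x S) - f S := by
        intro x _
        have := hmono S (insert x S) (Finset.subset_insert _ _)
        linarith
      have htel := submod_telescope f hsub S Sstar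
      have hsub' : Sstar \ S ⊆ Finset.univ \ S :=
        Finset.sdiff_subset_sdiff (Finset.subset_univ _) (le_refl _)
      have hge : f Sstar - f S ≤ ∑ x ∈ Finset.univ \ S, (f (insert x S) - f S) := by
        have h1 : f Sstar ≤ f (Sstar ∪ S) := hmono _ _ Finset.subset_union_left
        have h2 : ∑ x ∈ Sstar \ S, (f (insert x S) - f S)
            ≤ ∑ x ∈ Finset.univ \ S, (f (insert x S) - f S) :=
          Finset.sum_le_sum_of_subset_of_nonneg hsub' (fun x hx _ => hmarg_nonneg x hx)
        linarith
      set n : ℝ := ((Finset.univ \ S : Finset V).card : ℝ) with hn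
      have hsum_expand : n⁻¹ * ∑ x ∈ Finset.univ \ S, f (insert x S)
          = f S + n⁻¹ * ∑ x ∈ Finset.univ \ S, (f (insert x S) - f S) := by
        rw [Finset.sum_sub_distrib, Finset.sum_const, mul_sub]
        field_simp
        ring
      rw [hsum_expand]
      by_cases hd : 0 ≤ f Sstar - f S
      · have h1 : (1 / (m : ℝ)) * (f Sstar - f S) ≤ n⁻¹ * (f Sstar - f S) := by
          apply mul_le_mul_of_nonneg_right _ hd
          rw [one_div]
          exact inv_anti₀ hcardpos hcardle
        have h2 : n⁻¹ * (f Sstar - f S)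
            ≤ n⁻¹ * ∑ x ∈ Finset.univ \ S, (f (insert x S) - f S) :=
          mul_le_mul_of_nonneg_left hge (by positivity)
        linarith
      · have h1 : (1 / (m : ℝ)) * (f Sstar - f S) ≤ 0 := by
          apply mul_nonpos_of_nonneg_of_nonpos (by positivity)
          linarith
        have h2 : 0 ≤ n⁻¹ * ∑ x ∈ Finset.univ \ S, (f (insert x S) - f S) := by
          apply mul_nonneg (by positivity)
          exact Finset.sum_nonneg hmarg_nonneg
        linarith
    · -- S = univ
      have hSuniv : S = Finset.univ := by
        rw [Finset.not_nonempty_iff_eq_empty, Finset.sdiff_eq_empty_iff_subset] at h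
        exact le_antisymm (Finset.subset_univ _) h
      rw [randomSampleStep, dif_neg (by rw [Finset.not_nonempty_iff_eq_empty,
        Finset.sdiff_eq_empty_iff_subset]; exact hSuniv ▸ le_refl _)]
      have hpure : ∑ T : Finset V, ((PMF.pure S) T).toReal * f T = f S := by
        rw [Finset.sum_eq_single S]
        · simp
        · intro T _ hT; rw [PMF.pure_apply, if_neg hT]; simp
        · simp
      rw [hpure]
      have : f Sstar ≤ f S := hSuniv ▸ hmono Sstar Finset.univ (Finset.subset_univ _)
      have h1 : (1 / (m : ℝ)) * (f Sstar - f S) ≤ 0 :=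
        mul_nonpos_of_nonneg_of_nonpos (by positivity) (by linarith)
      linarith
  -- the main induction
  set E : ℕ → ℝ := fun i => ∑ S : Finset V, ((randomSampleProc V i) S).toReal * f S with hE
  have key : ∀ i, f Sstar - E i ≤ (1 - 1/m)^i * f Sstar := by
    intro i
    induction i with
    | zero =>
      have : E 0 = 0 := by
        rw [hE]
        simp only [randomSampleProc]
        rw [Finset.sum_eq_single (∅ : Finset V)]
        · simp [hnorm]
        · intro T _ hT; rw [PMF.pure_apply, if_neg hT]; simp
        · simp
      rw [this]
      simp
    | succ i ih =>
      have hrec : E i + (1/m) * (f Sstar - E i) ≤ E (i+1) := by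
        rw [hE]
        simp only [randomSampleProc]
        rw [pmf_bind_exp]
        have h1 : ∑ S : Finset V, ((randomSampleProc V i) S).toReal
              * (f S + (1/m) * (f Sstar - f S))
            ≤ ∑ S : Finset V, ((randomSampleProc V i) S).toReal
              * ∑ T : Finset V, ((randomSampleStep S) T).toReal * f T := by
          refine Finset.sum_le_sum fun S _ => ?_
          exact mul_le_mul_of_nonneg_left (step_bound S) ENNReal.toReal_nonneg
        have h2 : ∑ S : Finset V, ((randomSampleProc V i) S).toReal
              * (f S + (1/m) * (f Sstar - f S))
            = E i + (1/m) * (f Sstar - E i) := by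
          have hone := pmf_sum_toReal_eq_one (randomSampleProc V i)
          have : ∀ S : Finset V, ((randomSampleProc V i) S).toReal
                * (f S + (1/m) * (f Sstar - f S))
              = (1 - 1/m) * (((randomSampleProc V i) S).toReal * f S)
                + ((1/m) * f Sstar) * ((randomSampleProc V i) S).toReal := by
            intro S; ring
          rw [Finset.sum_congr rfl fun S _ => this S, Finset.sum_add_distrib,
            ← Finset.mul_sum, ← Finset.mul_sum, hone]
          simp only [hE]
          ring
        linarith
      have hcoef : (0:ℝ) ≤ 1 - 1/m := by
        have : 1/(m:ℝ) ≤ 1 := by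
          rw [div_le_one hmpos]; exact hmR
        linarith
      calc f Sstar - E (i+1) ≤ f Sstar - (E i + (1/m) * (f Sstar - E i)) := by linarith
        _ = (1 - 1/m) * (f Sstar - E i) := by ring
        _ ≤ (1 - 1/m) * ((1 - 1/m)^i * f Sstar) := mul_le_mul_of_nonneg_left ih hcoef
        _ = (1 - 1/m)^(i+1) * f Sstar := by ring
  -- finish: (1 - 1/m)^k ≤ exp(-k/m)
  have hexp : (1 - 1/(m:ℝ))^k ≤ Real.exp (-(k:ℝ)/(m:ℝ)) := by
    have h1 : (1 - 1/(m:ℝ)) ≤ Real.exp (-(1/(m:ℝ))) := by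
      have := Real.add_one_le_exp (-(1/(m:ℝ)))
      linarith
    have hcoef : (0:ℝ) ≤ 1 - 1/m := by
      have : 1/(m:ℝ) ≤ 1 := by rw [div_le_one hmpos]; exact hmR
      linarith
    calc (1 - 1/(m:ℝ))^k ≤ (Real.exp (-(1/(m:ℝ))))^k := pow_le_pow_left₀ hcoef h1 k
      _ = Real.exp ((k:ℝ) * (-(1/(m:ℝ)))) := by rw [← Real.exp_nat_mul]
      _ = Real.exp (-(k:ℝ)/(m:ℝ)) := by ring_nf
  have hkey := key k
  have h1 : (1 - 1/(m:ℝ))^k * f Sstar ≤ Real.exp (-(k:ℝ)/(m:ℝ)) * f Sstar :=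
    mul_le_mul_of_nonneg_right hexp hfstar
  have h2 : 0 ≤ (1 / Real.exp 1) * f Sstar := by positivity
  have : (1 - 1 / Real.exp 1 - Real.exp (-(k : ℝ) / (m : ℝ))) * f Sstar
      ≤ f Sstar - Real.exp (-(k:ℝ)/(m:ℝ)) * f Sstar := by nlinarith
  calc (1 - 1 / Real.exp 1 - Real.exp (-(k : ℝ) / (m : ℝ))) * f Sstar
      ≤ f Sstar - Real.exp (-(k:ℝ)/(m:ℝ)) * f Sstar := this
    _ ≤ f Sstar - (1 - 1/(m:ℝ))^k * f Sstar := by linarith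
    _ ≤ E k := by linarith
end
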